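/- arXiv:2006.08852 — 2 statements merged into one kernel-verified Lean document; each statement's English description precedes it below -/
import Mathlib

section
/- Let f : X → Y, S a set of features, and for x ∈ X define B(x) = {x' ∈ X : ∀ i ∈ S, x'[i] ≤ x[i]; ∀ k ∉ S, x'[k] = x[k]; and f(x') > f(x)}. Define the upper envelope f_S^u(x) = max_{x' ∈ B(x)} f(x') if B(x) ≠ ∅ (assuming the maximum is attained), and f_S^u(x) = f(x) otherwise. Then f_S^u is monotonically increasing in S: for any i₀ ∈ S and any x, x' with x[i₀] ≤ x'[i₀] and x[k] = x'[k] for all k ≠ i₀, we have f_S^u(x) ≤ f_S^u(x'). -/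
/-- the multi-dimensional upper envelope f_S^u is monotonically
increasing in S. `fu` satisfies the defining property: at each x it equals the
max of f over B(x) = {x' ∈ X : ∀ i ∈ S, x'[i] ≤ x[i]; ∀ k ∉ S, x'[k] = x[k];
f(x') > f(x)} when B(x) is nonempty (maximizer attained), else f x. -/
theorem upper_envelope_multi_monotone
    {d : ℕ} {Y : Type*} [LinearOrder Y]
    (X : Set (Fin d → ℝ)) (f fu : (Fin d → ℝ) → Y) (S : Set (Fin d))
    (hfu : ∀ x ∈ X,
      (∃ m ∈ X, (∀ i ∈ S, m i ≤ x i) ∧ (∀ k ∉ S, m k = x k) ∧ f x < f m ∧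
        fu x = f m ∧
        ∀ y ∈ X, (∀ i ∈ S, y i ≤ x i) → (∀ k ∉ S, y k = x k) → f x < f y →
          f y ≤ f m)
      ∨ ((¬ ∃ y ∈ X, (∀ i ∈ S, y i ≤ x i) ∧ (∀ k ∉ S, y k = x k) ∧ f x < f y) ∧
         fu x = f x)) :
    ∀ i₀ ∈ S, ∀ x ∈ X, ∀ x' ∈ X, x i₀ ≤ x' i₀ → (∀ k, k ≠ i₀ → x k = x' k) →
      fu x ≤ fu x' := by
  intro i₀ hi₀ x hx x' hx' hle heq
  -- anything feasible for x is feasible for x'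
  have feas : ∀ y : Fin d → ℝ, (∀ i ∈ S, y i ≤ x i) → (∀ k ∉ S, y k = x k) →
      (∀ i ∈ S, y i ≤ x' i) ∧ (∀ k ∉ S, y k = x' k) := by
    intro y h1 h2
    constructor
    · intro i hi
      by_cases h : i = i₀
      · subst h; exact le_trans (h1 i hi) hle
      · rw [← heq i h]; exact h1 i hi
    · intro k hk
      have hk0 : k ≠ i₀ := fun h => hk (h ▸ hi₀)
      rw [h2 k hk, heq k hk0]
  rcases hfu x hx with ⟨m, hmX, hm1, hm2, hm3, hm4, _⟩ | ⟨hne, hfx⟩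
  · -- fu x = f m with f x < f m; m is feasible for x'
    rw [hm4]
    obtain ⟨hm1', hm2'⟩ := feas m hm1 hm2
    rcases hfu x' hx' with ⟨m', hm'X, hm'1, hm'2, hm'3, hm'4, hmax'⟩ | ⟨hne', hfx'⟩
    · rw [hm'4]
      by_cases h : f x' < f m
      · exact hmax' m hmX hm1' hm2' h
      · exact le_trans (not_lt.mp h) (le_of_lt hm'3)
    · rw [hfx']
      by_contra h
      exact hne' ⟨m, hmX, hm1', hm2', not_le.mp h⟩
  · rw [hfx]
    have hxfeas : (∀ i ∈ S, x i ≤ x' i) ∧ (∀ k ∉ S, x k = x' k) :=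
      feas x (fun i _ => le_refl _) (fun k _ => rfl)
    rcases hfu x' hx' with ⟨m', hm'X, hm'1, hm'2, hm'3, hm'4, hmax'⟩ | ⟨hne', hfx'⟩
    · rw [hm'4]
      by_cases h : f x' < f x
      · exact hmax' x hx hxfeas.1 hxfeas.2 h
      · exact le_trans (not_lt.mp h) (le_of_lt hm'3)
    · rw [hfx']
      by_contra h
      exact hne' ⟨x, hx, hxfeas.1, hxfeas.2, not_le.mp h⟩
end

section
/- Let f : X → Y, S a set of features. Define the lower envelope f_S^l(x) = min_{x' ∈ A(x)} f(x') if A(x) = {x' : ∀ i ∈ S, x[i] ≤ x'[i]; ∀ k ∉ S, x[k] = x'[k]; f(x) > f(x')} is nonempty (assuming the minimum is attained), and f_S^l(x) = f(x) otherwise. Then f_S^l is monotonically increasing in S. -/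
/-- the multi-dimensional lower envelope f_S^l is monotonically
increasing in S. `fl` satisfies: at each x it equals the min of f over
A(x) = {x' ∈ X : ∀ i ∈ S, x[i] ≤ x'[i]; ∀ k ∉ S, x[k] = x'[k]; f(x) > f(x')}
when A(x) is nonempty (minimizer attained), else f x. -/
theorem lower_envelope_multi_monotone
    {d : ℕ} {Y : Type*} [LinearOrder Y]
    (X : Set (Fin d → ℝ)) (f fl : (Fin d → ℝ) → Y) (S : Set (Fin d))
    (hfl : ∀ x ∈ X,
      (∃ m ∈ X, (∀ i ∈ S, x i ≤ m i) ∧ (∀ k ∉ S, x k = m k) ∧ f m < f x ∧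
        fl x = f m ∧
        ∀ y ∈ X, (∀ i ∈ S, x i ≤ y i) → (∀ k ∉ S, x k = y k) → f y < f x →
          f m ≤ f y)
      ∨ ((¬ ∃ y ∈ X, (∀ i ∈ S, x i ≤ y i) ∧ (∀ k ∉ S, x k = y k) ∧ f y < f x) ∧
         fl x = f x)) :
    ∀ i₀ ∈ S, ∀ x ∈ X, ∀ x' ∈ X, x i₀ ≤ x' i₀ → (∀ k, k ≠ i₀ → x k = x' k) →
      fl x ≤ fl x' := by
  intro i₀ hi₀ x hx x' hx' hle heq
  -- any point feasible for x' is feasible for x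
  have feas : ∀ y : Fin d → ℝ, (∀ i ∈ S, x' i ≤ y i) → (∀ k ∉ S, x' k = y k) →
      (∀ i ∈ S, x i ≤ y i) ∧ (∀ k ∉ S, x k = y k) := by
    intro y h1 h2
    constructor
    · intro i hi
      by_cases h : i = i₀
      · subst h; exact hle.trans (h1 i hi)
      · rw [heq i h]; exact h1 i hi
    · intro k hk
      have : k ≠ i₀ := fun h => hk (h ▸ hi₀)
      rw [heq k this]; exact h2 k hk
  -- x' is feasible for x
  have feasx' : (∀ i ∈ S, x i ≤ x' i) ∧ (∀ k ∉ S, x k = x' k) :=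
    feas x' (fun i _ => le_refl _) (fun _ _ => rfl)
  rcases hfl x' hx' with ⟨m', hm'X, hm'1, hm'2, hm'lt, hflx', _⟩ |
      ⟨hnone', hflx'⟩
  · -- fl x' = f m', m' feasible for x
    obtain ⟨hf1, hf2⟩ := feas m' hm'1 hm'2
    rw [hflx']
    rcases hfl x hx with ⟨m, hmX, hm1, hm2, hmlt, hflx, hmin⟩ | ⟨hnone, hflx⟩
    · rw [hflx]
      rcases lt_or_ge (f m') (f x) with h | h
      · exact hmin m' hm'X hf1 hf2 h
      · exact (hmlt.trans_le h).le
    · rw [hflx]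
      by_contra hcon
      exact hnone ⟨m', hm'X, hf1, hf2, lt_of_not_ge hcon⟩
  · -- fl x' = f x'
    rw [hflx']
    rcases hfl x hx with ⟨m, hmX, hm1, hm2, hmlt, hflx, hmin⟩ | ⟨hnone, hflx⟩
    · rw [hflx]
      rcases lt_or_ge (f x') (f x) with h | h
      · exact hmin x' hx' feasx'.1 feasx'.2 h
      · exact (hmlt.trans_le h).le
    · rw [hflx]
      by_contra hcon
      exact hnone ⟨x', hx', feasx'.1, feasx'.2, lt_of_not_ge hcon⟩
end
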